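/- Let W = U + iV be holomorphic and zero-free on the strip Π_{−C,C}, real-valued on the real axis, with W' ∈ H¹(Π_{−C,C}) and 1/W' ∈ H¹(Π_{−C,C}). Write log W' = log|W'| + iΘ where Θ is the harmonic conjugate normalized by Θ(x,0) = 0. Then for every p ∈ (1,∞), both log|W'| and Θ belong to the harmonic Hardy space h^p(Π_{−C,C}). -/

import Mathlib

open Set Complex

noncomputable section

/-- The open horizontal strip `{z : a < Im z < b}`. -/
def Strip (a b : ℝ) : Set ℂ := {z : ℂ | a < z.im ∧ z.im < b}

/-- A real-valued function is harmonic on a set if it is `C²` there and its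
Laplacian vanishes. -/
def HarmonicOn (u : ℂ → ℝ) (s : Set ℂ) : Prop :=
  ContDiffOn ℝ 2 u s ∧ ∀ z ∈ s,
    fderiv ℝ (fun w => fderiv ℝ u w 1) z 1 +
      fderiv ℝ (fun w => fderiv ℝ u w Complex.I) z Complex.I = 0

/-- `f` admits a harmonic majorant on `s`. -/
def HasHarmonicMajorantOn (f : ℂ → ℝ) (s : Set ℂ) : Prop :=
  ∃ u : ℂ → ℝ, HarmonicOn u s ∧ ∀ z ∈ s, f z ≤ u z

/-- Membership in the Hardy space `H¹(s)`. -/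
def MemHardyOne (F : ℂ → ℂ) (s : Set ℂ) : Prop :=
  DifferentiableOn ℂ F s ∧ HasHarmonicMajorantOn (fun z => ‖F z‖) s

/-!
Exponentiating, `e^{|log ‖W'‖|} ≤ ‖W'‖ + ‖W'‖⁻¹`, so `|log ‖W'‖|ⁿ ≤ n! e^{|log ‖W'‖|}` has a
harmonic majorant for every `n`. For the conjugate, M. Riesz's theorem is replaced by its
elementary case of even exponents: `log W' = log ‖W'‖ + iΘ` is holomorphic (a continuous logarithm
of a holomorphic function), for `w = x + iy` and even `n` one has `xⁿ ≤ 2 Re wⁿ + Kₙ yⁿ`, and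
`Re (i log W')ⁿ` is harmonic; this bounds `Θⁿ` by a harmonic function plus `Kₙ |log ‖W'‖|ⁿ`.
Real exponents `p ≤ n` follow from `tᵖ ≤ 1 + tⁿ`.
-/

open Filter Topology InnerProductSpace Laplacian

theorem ContDiffAt.laplacian_eq_fderiv_fderiv {u : ℂ → ℝ} {x : ℂ} (hu : ContDiffAt ℝ 2 u x) :
    Δ u x = fderiv ℝ (fun w => fderiv ℝ u w 1) x 1 + fderiv ℝ (fun w => fderiv ℝ u w I) x I := by
  have hdu : DifferentiableAt ℝ (fderiv ℝ u) x :=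
    (hu.fderiv_right (m := 1) (by norm_num)).differentiableAt one_ne_zero
  rw [laplacian_eq_iteratedFDeriv_complexPlane]
  simp only [iteratedFDeriv_two_apply, fderiv_clm_apply hdu (differentiableAt_const _)]
  simp

theorem harmonicOn_iff_harmonicOnNhd {u : ℂ → ℝ} {s : Set ℂ} (hs : IsOpen s) :
    HarmonicOn u s ↔ HarmonicOnNhd u s := by
  refine ⟨fun ⟨hu, hΔ⟩ x hx => ⟨hu.contDiffAt (hs.mem_nhds hx), ?_⟩,
    fun h => ⟨h.contDiffOn, fun z hz => ?_⟩⟩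
  · filter_upwards [hs.mem_nhds hx] with y hy
    rw [(hu.contDiffAt (hs.mem_nhds hy)).laplacian_eq_fderiv_fderiv]
    exact hΔ y hy
  · rw [← (h z hz).1.laplacian_eq_fderiv_fderiv]
    exact (h z hz).2.self_of_nhds

theorem hasHarmonicMajorantOn_const (c : ℝ) (s : Set ℂ) :
    HasHarmonicMajorantOn (fun _ => c) s :=
  ⟨fun _ => c, ⟨contDiffOn_const, fun z _ => by simp⟩, fun _ _ => le_rfl⟩

namespace HasHarmonicMajorantOn

variable {f g : ℂ → ℝ} {s : Set ℂ}

theorem mono (hg : HasHarmonicMajorantOn g s) (hfg : ∀ z ∈ s, f z ≤ g z) :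
    HasHarmonicMajorantOn f s :=
  let ⟨u, hu, hgu⟩ := hg
  ⟨u, hu, fun z hz => (hfg z hz).trans (hgu z hz)⟩

theorem add (hs : IsOpen s) (hf : HasHarmonicMajorantOn f s) (hg : HasHarmonicMajorantOn g s) :
    HasHarmonicMajorantOn (fun z => f z + g z) s := by
  obtain ⟨u, hu, hfu⟩ := hf
  obtain ⟨v, hv, hgv⟩ := hg
  rw [harmonicOn_iff_harmonicOnNhd hs] at hu hv
  exact ⟨u + v, (harmonicOn_iff_harmonicOnNhd hs).2 (hu.add hv),
    fun z hz => add_le_add (hfu z hz) (hgv z hz)⟩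

theorem const_mul (hs : IsOpen s) (hf : HasHarmonicMajorantOn f s) {c : ℝ} (hc : 0 ≤ c) :
    HasHarmonicMajorantOn (fun z => c * f z) s := by
  obtain ⟨u, hu, hfu⟩ := hf
  rw [harmonicOn_iff_harmonicOnNhd hs] at hu
  exact ⟨c • u, (harmonicOn_iff_harmonicOnNhd hs).2 hu.const_smul,
    fun z hz => mul_le_mul_of_nonneg_left (hfu z hz) hc⟩

theorem abs_rpow_of_le {n : ℕ} (hs : IsOpen s)
    (h : HasHarmonicMajorantOn (fun z => |f z| ^ n) s) {p : ℝ} (hp : 0 ≤ p) (hpn : p ≤ n) :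
    HasHarmonicMajorantOn (fun z => |f z| ^ p) s := by
  refine ((hasHarmonicMajorantOn_const 1 s).add hs h).mono fun z _ => ?_
  rcases le_or_gt |f z| 1 with h1 | h1
  · linarith [Real.rpow_le_one (abs_nonneg (f z)) h1 hp, pow_nonneg (abs_nonneg (f z)) n]
  · have := Real.rpow_le_rpow_of_exponent_le h1.le hpn
    rw [Real.rpow_natCast] at this
    linarith

end HasHarmonicMajorantOn

theorem DifferentiableOn.hasHarmonicMajorantOn_re {F : ℂ → ℂ} {s : Set ℂ} (hs : IsOpen s)
    (hF : DifferentiableOn ℂ F s) : HasHarmonicMajorantOn (fun z => (F z).re) s :=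
  ⟨_, (harmonicOn_iff_harmonicOnNhd hs).2 fun _ hz => (hF.analyticOnNhd hs _ hz).harmonicAt_re,
    fun _ _ => le_rfl⟩

theorem ContinuousOn.differentiableOn_of_exp_eq {s : Set ℂ} {F g : ℂ → ℂ}
    (hF : ContinuousOn F s) (hs : IsOpen s) (hg : DifferentiableOn ℂ g s)
    (hexp : ∀ z ∈ s, exp (F z) = g z) : DifferentiableOn ℂ F s := by
  intro z₀ hz₀
  have hnhds := hs.mem_nhds hz₀
  have hclose : ∀ᶠ z in 𝓝 z₀, (F z - F z₀).im ∈ Ioo (-Real.pi) Real.pi := by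
    have : Tendsto (fun z => (F z - F z₀).im) (𝓝 z₀) (𝓝 0) := by
      have h := (continuous_im.tendsto _).comp ((hF.continuousAt hnhds).sub_const (F z₀))
      simpa [Function.comp_def] using h
    exact this.eventually (Ioo_mem_nhds (by linarith [Real.pi_pos]) Real.pi_pos)
  have hlocal : F =ᶠ[𝓝 z₀] fun z => F z₀ + Complex.log (g z / g z₀) := by
    filter_upwards [hclose, hnhds] with z hz hzs
    rw [← hexp z hzs, ← hexp z₀ hz₀, ← exp_sub, log_exp hz.1 hz.2.le]
    ring
  have hslit : g z₀ / g z₀ ∈ slitPlane := by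
    rw [div_self (hexp z₀ hz₀ ▸ exp_ne_zero _)]
    exact one_mem_slitPlane
  exact ((((hg.differentiableAt hnhds).div_const _).clog hslit).const_add _
    |>.congr_of_eventuallyEq hlocal).differentiableWithinAt

theorem norm_add_pow_sub_pow_le {R : Type*} [SeminormedRing R] [NormOneClass R] (a b : R)
    (n : ℕ) : ‖(a + b) ^ n - a ^ n‖ ≤ (‖a‖ + ‖b‖) ^ n - ‖a‖ ^ n := by
  induction n with
  | zero => simp
  | succ n ih =>
    calc ‖(a + b) ^ (n + 1) - a ^ (n + 1)‖
        = ‖((a + b) ^ n - a ^ n) * (a + b) + a ^ n * b‖ := by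
          rw [pow_succ, pow_succ]; noncomm_ring
      _ ≤ ‖(a + b) ^ n - a ^ n‖ * ‖a + b‖ + ‖a‖ ^ n * ‖b‖ :=
          norm_add_le_of_le (norm_mul_le _ _)
            ((norm_mul_le _ _).trans (by gcongr; exact norm_pow_le a n))
      _ ≤ ((‖a‖ + ‖b‖) ^ n - ‖a‖ ^ n) * (‖a‖ + ‖b‖) + ‖a‖ ^ n * ‖b‖ := by
          gcongr
          · exact (norm_nonneg _).trans ih
          · exact norm_add_le a b
      _ = (‖a‖ + ‖b‖) ^ (n + 1) - ‖a‖ ^ (n + 1) := by ring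

theorem two_mul_add_pow_le (n : ℕ) {a b : ℝ} (ha : 0 ≤ a) (hb : 0 ≤ b) :
    2 * (a + b) ^ n ≤ 3 * a ^ n + 2 * (3 * n + 1) ^ n * b ^ n := by
  rcases le_or_gt a (3 * n * b) with hab | hab
  · have : (a + b) ^ n ≤ ((3 * n + 1) * b) ^ n := by gcongr; linarith
    rw [mul_pow] at this
    nlinarith [pow_nonneg ha n]
  rcases Nat.eq_zero_or_pos n with rfl | hn
  · norm_num
  have hn' : (0 : ℝ) < n := by exact_mod_cast hn
  set δ : ℝ := 1 / (3 * n)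
  have hδ : (1 + δ) ^ n ≤ 3 / 2 := by
    calc (1 + δ) ^ n ≤ Real.exp δ ^ n := by
          gcongr; linarith [Real.add_one_le_exp δ]
      _ = Real.exp (1 / 3) := by
          rw [← Real.exp_nat_mul]; congr 1; simp only [δ]; field_simp
      _ ≤ 1 / (1 - 1 / 3) := Real.exp_bound_div_one_sub_of_interval (by norm_num) (by norm_num)
      _ = 3 / 2 := by norm_num
  have hab' : a + b ≤ (1 + δ) * a := by
    have : b ≤ δ * a := by
      rw [div_mul_eq_mul_div, one_mul, le_div_iff₀ (by positivity)]; linarith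
    linarith
  have : (a + b) ^ n ≤ 3 / 2 * a ^ n := by
    calc (a + b) ^ n ≤ ((1 + δ) * a) ^ n := by gcongr
      _ = (1 + δ) ^ n * a ^ n := mul_pow _ _ _
      _ ≤ 3 / 2 * a ^ n := by gcongr
  nlinarith [pow_nonneg hb n, pow_nonneg (by positivity : (0 : ℝ) ≤ 3 * n + 1) n]

theorem Complex.re_pow_le_two_mul_re_pow_add (w : ℂ) {n : ℕ} (hn : Even n) :
    w.re ^ n ≤ 2 * (w ^ n).re + 2 * (3 * n + 1) ^ n * w.im ^ n := by
  have hdiff : ‖w ^ n - (w.re : ℂ) ^ n‖ ≤ (|w.re| + |w.im|) ^ n - |w.re| ^ n := by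
    simpa [re_add_im] using norm_add_pow_sub_pow_le (w.re : ℂ) (w.im * I) n
  have hre : |w.re| ^ n - ((|w.re| + |w.im|) ^ n - |w.re| ^ n) ≤ (w ^ n).re := by
    have h := neg_le_of_abs_le ((abs_re_le_norm _).trans hdiff)
    rw [sub_re, ← ofReal_pow, ofReal_re, ← hn.pow_abs w.re] at h
    linarith
  have := two_mul_add_pow_le n (abs_nonneg w.re) (abs_nonneg w.im)
  rw [← hn.pow_abs w.re, ← hn.pow_abs w.im]
  linarith

theorem Real.exp_abs_log_le_add_inv {x : ℝ} (hx : 0 < x) : Real.exp |Real.log x| ≤ x + x⁻¹ := by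
  rcases abs_cases (Real.log x) with ⟨h, _⟩ | ⟨h, _⟩ <;>
    simp only [h, Real.exp_neg, Real.exp_log hx] <;> linarith [inv_pos.2 hx]

theorem MemHardyOne.hasHarmonicMajorantOn_abs_log_norm_pow {F : ℂ → ℂ} {s : Set ℂ}
    (hs : IsOpen s) (hF : MemHardyOne F s) (hFinv : MemHardyOne (fun z => (F z)⁻¹) s)
    (hF0 : ∀ z ∈ s, F z ≠ 0) (n : ℕ) :
    HasHarmonicMajorantOn (fun z => |Real.log ‖F z‖| ^ n) s := by
  refine ((hF.2.add hs hFinv.2).const_mul hs (Nat.cast_nonneg n.factorial)).mono fun z hz => ?_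
  have hpos : 0 < ‖F z‖ := norm_pos_iff.2 (hF0 z hz)
  calc |Real.log ‖F z‖| ^ n ≤ n.factorial * Real.exp |Real.log ‖F z‖| := by
        have := Real.pow_div_factorial_le_exp _ (abs_nonneg (Real.log ‖F z‖)) n
        rwa [div_le_iff₀' (by positivity)] at this
    _ ≤ n.factorial * (‖F z‖ + ‖(F z)⁻¹‖) := by
        rw [norm_inv]; gcongr; exact Real.exp_abs_log_le_add_inv hpos

theorem HasHarmonicMajorantOn.abs_pow_conj {u v : ℂ → ℝ} {s : Set ℂ} {n : ℕ} (hs : IsOpen s)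
    (h : HasHarmonicMajorantOn (fun z => |u z| ^ n) s)
    (hG : DifferentiableOn ℂ (fun z => (u z : ℂ) + v z * I) s) (hn : Even n) :
    HasHarmonicMajorantOn (fun z => |v z| ^ n) s := by
  have hRe : HasHarmonicMajorantOn (fun z => ((I * (u z + v z * I)) ^ n).re) s :=
    ((hG.const_mul I).pow n).hasHarmonicMajorantOn_re hs
  refine ((hRe.const_mul hs zero_le_two).add hs
    (h.const_mul hs (c := 2 * (3 * n + 1) ^ n) (by positivity))).mono
    fun z _ => ?_
  have := (I * (u z + v z * I)).re_pow_le_two_mul_re_pow_add hn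
  simp only [mul_re, mul_im, I_re, I_im, add_re, add_im, ofReal_re, ofReal_im] at this
  rw [hn.pow_abs, hn.pow_abs]
  simpa [hn.neg_pow] using this

theorem log_modulus_and_conjugate_in_hp_general
    (C : ℝ) (W : ℂ → ℂ) (Θ : ℂ → ℝ)
    (hW' : ∀ z ∈ Strip (-C) C, deriv W z ≠ 0)
    (hH1 : MemHardyOne (deriv W) (Strip (-C) C))
    (hH1inv : MemHardyOne (fun z => (deriv W z)⁻¹) (Strip (-C) C))
    (hΘharm : HarmonicOn Θ (Strip (-C) C))
    (hlog : ∀ z ∈ Strip (-C) C,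
      Complex.exp ((Real.log ‖deriv W z‖ : ℂ) + (Θ z : ℂ) * Complex.I)
        = deriv W z) :
    ∀ p : ℝ, 1 < p →
      HasHarmonicMajorantOn
        (fun z => |Real.log ‖deriv W z‖| ^ p) (Strip (-C) C) ∧
      HasHarmonicMajorantOn (fun z => |Θ z| ^ p) (Strip (-C) C) := by
  intro p hp
  have hs : IsOpen (Strip (-C) C) := isOpen_Ioo.preimage continuous_im
  have hL := hH1.hasHarmonicMajorantOn_abs_log_norm_pow hs hH1inv hW'
  have hG : DifferentiableOn ℂ
      (fun z => (Real.log ‖deriv W z‖ : ℂ) + (Θ z : ℂ) * I) (Strip (-C) C) := by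
    refine ContinuousOn.differentiableOn_of_exp_eq ?_ hs hH1.1 hlog
    have hlogc : ContinuousOn (fun z => Real.log ‖deriv W z‖) (Strip (-C) C) :=
      hH1.1.continuousOn.norm.log fun z hz => norm_ne_zero_iff.2 (hW' z hz)
    exact (continuous_ofReal.comp_continuousOn hlogc).add
      ((continuous_ofReal.comp_continuousOn hΘharm.1.continuousOn).mul continuousOn_const)
  have hpn : p ≤ (2 * ⌈p⌉₊ : ℕ) := by
    push_cast; linarith [Nat.le_ceil p, Nat.cast_nonneg (α := ℝ) ⌈p⌉₊]
  exact ⟨(hL _).abs_rpow_of_le hs (by linarith) hpn,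
    ((hL _).abs_pow_conj hs hG (even_two_mul _)).abs_rpow_of_le hs (by linarith) hpn⟩

/-- If `W` is holomorphic on the strip `Π_{-C,C}`, real-valued on the real
axis, with `W' ≠ 0`, `W' ∈ H¹` and `1/W' ∈ H¹`, and `log W' = log|W'| + iΘ`
with `Θ` harmonic, `Θ(x,0) = 0`, then for every `p ∈ (1,∞)` both `log|W'|`
and `Θ` belong to the harmonic Hardy space `h^p(Π_{-C,C})`. -/
theorem log_modulus_and_conjugate_in_hp
    (C : ℝ) (hC : 0 < C) (W : ℂ → ℂ) (Θ : ℂ → ℝ)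
    (hW : DifferentiableOn ℂ W (Strip (-C) C))
    (hWz : ∀ z ∈ Strip (-C) C, W z ≠ 0)
    (hreal : ∀ x : ℝ, ((x : ℂ) ∈ Strip (-C) C) → (W (x : ℂ)).im = 0)
    (hW' : ∀ z ∈ Strip (-C) C, deriv W z ≠ 0)
    (hH1 : MemHardyOne (deriv W) (Strip (-C) C))
    (hH1inv : MemHardyOne (fun z => (deriv W z)⁻¹) (Strip (-C) C))
    (hΘharm : HarmonicOn Θ (Strip (-C) C))
    (hΘ0 : ∀ x : ℝ, Θ (x : ℂ) = 0)
    (hlog : ∀ z ∈ Strip (-C) C,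
      Complex.exp ((Real.log ‖deriv W z‖ : ℂ) + (Θ z : ℂ) * Complex.I)
        = deriv W z) :
    ∀ p : ℝ, 1 < p →
      HasHarmonicMajorantOn
        (fun z => |Real.log ‖deriv W z‖| ^ p) (Strip (-C) C) ∧
      HasHarmonicMajorantOn (fun z => |Θ z| ^ p) (Strip (-C) C) :=
  log_modulus_and_conjugate_in_hp_general C W Θ hW' hH1 hH1inv hΘharm hlog
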